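/- If (D, ⊣, ⊢) is a doppelsemigroup and z is a left zero of the semigroup (D, ⊣) (i.e., z ⊣ a = z for all a ∈ D), then z is a left zero of the semigroup (D, ⊢). -/

import Mathlib

theorem left_zero_of_doppelsemigroup {D : Type*} (d h : D → D → D)
    (ax1 : ∀ x y z, h (d x y) z = d x (h y z))
    (z : D) (hz : ∀ a, d z a = z) :
    ∀ a, h z a = z := by
  intro a
  calc h z a = h (d z z) a := by rw [hz]
    _ = d z (h z a) := ax1 z z a
    _ = z := hz _
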